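/- For every integer m ≥ 2, the function (t,y) ↦ t^{m−1}·(−2 + iy)^m·exp(−π t(4 + y²))·e^{2πiy} is absolutely integrable on (0,∞) × ℝ, and ∫_ℝ ∫₀^∞ t^{m−1}·(−2 + iy)^m·exp(−π t(4 + y²))·e^{2πiy} dt dy = (−2)^m · e^{−4π}. -/

import Mathlib

/-!
The `t`-integral is a Gamma integral: it equals `(m-1)! (-2+iy)^m e^{2πiy} / (π(4+y²))^m`.
Since `(-2+iy)(4π+2πiy) = -2π(4+y²)`, this is `(-2)^m e^{2πiy} 𝓕g(y)` for the one-sided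
function `g(t) = t^{m-1} e^{-4πt} 𝟙_{t>0}`, whose Fourier transform `(m-1)!/(4π+2πiy)^m` is
integrable once `m ≥ 2`. Fourier inversion at `t = 1` then gives `∫ e^{2πiy} 𝓕g(y) dy = g(1)
= e^{-4π}`. For absolute integrability, the `t`-integrand is a constant times a positive
function, so its `L¹` norm is the modulus of its integral, i.e. `2^m |𝓕g(y)|`.
-/

open Complex Real MeasureTheory Set Filter Topology
open scoped Nat FourierTransform

section PowMulExp

variable {a : ℂ}

lemma norm_ofReal_pow_mul_cexp_neg_mul (n : ℕ) {t : ℝ} (ht : 0 ≤ t) :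
    ‖(t : ℂ) ^ n * cexp (-a * t)‖ = t ^ n * rexp (-a.re * t) := by
  simp [norm_exp, abs_of_nonneg ht]

lemma integrableOn_ofReal_pow_mul_cexp_neg_mul (n : ℕ) (ha : 0 < a.re) :
    IntegrableOn (fun t : ℝ => (t : ℂ) ^ n * cexp (-a * t)) (Ioi 0) := by
  have hreal := integrableOn_rpow_mul_exp_neg_mul_rpow (p := 1) (s := n)
    (neg_one_lt_zero.trans_le n.cast_nonneg) one_pos ha
  refine hreal.integrable.mono' (by fun_prop) ?_
  filter_upwards [ae_restrict_mem measurableSet_Ioi] with t ht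
  rw [norm_ofReal_pow_mul_cexp_neg_mul n ht.le, Real.rpow_one, Real.rpow_natCast]

lemma tendsto_ofReal_pow_mul_cexp_neg_mul_atTop (n : ℕ) (ha : 0 < a.re) :
    Tendsto (fun t : ℝ => (t : ℂ) ^ n * cexp (-a * t)) atTop (𝓝 0) := by
  refine squeeze_zero_norm' ?_ (tendsto_rpow_mul_exp_neg_mul_atTop_nhds_zero n _ ha)
  filter_upwards [eventually_ge_atTop 0] with t ht
  rw [norm_ofReal_pow_mul_cexp_neg_mul n ht, Real.rpow_natCast]

lemma integral_Ioi_ofReal_pow_succ_mul_cexp_neg_mul (n : ℕ) (ha : 0 < a.re) :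
    ∫ t in Ioi (0 : ℝ), (t : ℂ) ^ (n + 1) * cexp (-a * t) =
      (n + 1) / a * ∫ t in Ioi (0 : ℝ), (t : ℂ) ^ n * cexp (-a * t) := by
  have ha0 : a ≠ 0 := by rintro rfl; simp at ha
  have hv (t : ℝ) : HasDerivAt (fun t : ℝ => -cexp (-a * t) / a) (cexp (-a * t)) t := by
    have hexp : HasDerivAt (fun x : ℝ => cexp (-a * x)) (cexp (-a * t) * -a) t := by
      simpa using ((hasDerivAt_id (t : ℂ)).const_mul (-a)).cexp.comp_ofReal
    exact (hexp.neg.div_const a).congr_deriv (by field_simp)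
  have hu'v :
      IntegrableOn (fun t : ℝ => (n + 1) * (t : ℂ) ^ n * (-cexp (-a * t) / a)) (Ioi 0) := by
    refine IntegrableOn.congr_fun ((integrableOn_ofReal_pow_mul_cexp_neg_mul n ha).const_mul
      (-(n + 1) / a : ℂ)) (fun t _ => ?_) measurableSet_Ioi
    ring
  have huv : Continuous fun t : ℝ => (t : ℂ) ^ (n + 1) * (-cexp (-a * t) / a) := by fun_prop
  have hparts := integral_Ioi_mul_deriv_eq_deriv_mul (a := 0) (a' := 0) (b' := 0)
    (u' := fun t : ℝ => (n + 1) * (t : ℂ) ^ n)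
    (fun t _ => by simpa using (hasDerivAt_pow (n + 1) (t : ℂ)).comp_ofReal) (fun t _ => hv t)
    (integrableOn_ofReal_pow_mul_cexp_neg_mul _ ha) hu'v
    (by simpa [Pi.mul_def] using (huv.tendsto 0).mono_left nhdsWithin_le_nhds)
    (by
      simpa [Pi.mul_def, mul_div_assoc', neg_div] using
        ((tendsto_ofReal_pow_mul_cexp_neg_mul_atTop (n + 1) ha).div_const a).neg)
  rw [hparts, sub_self, zero_sub, ← integral_neg, ← integral_const_mul]
  congr 1 with t
  ring

lemma integral_Ioi_ofReal_pow_mul_cexp_neg_mul (n : ℕ) (ha : 0 < a.re) :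
    ∫ t in Ioi (0 : ℝ), (t : ℂ) ^ n * cexp (-a * t) = n ! / a ^ (n + 1) := by
  have ha0 : a ≠ 0 := by rintro rfl; simp at ha
  induction n with
  | zero => simpa [neg_mul] using integral_exp_mul_complex_Ioi (a := -a) (by simpa) 0
  | succ n ih =>
    rw [integral_Ioi_ofReal_pow_succ_mul_cexp_neg_mul n ha, ih, Nat.factorial_succ]
    push_cast
    field_simp
    ring

end PowMulExp

lemma integral_Ioi_pow_mul_exp_neg_mul (n : ℕ) {a : ℝ} (ha : 0 < a) :
    ∫ t in Ioi (0 : ℝ), t ^ n * rexp (-a * t) = n ! / a ^ (n + 1) := by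
  apply ofReal_injective
  rw [← integral_complex_ofReal]
  push_cast
  exact integral_Ioi_ofReal_pow_mul_cexp_neg_mul n (by simpa)

lemma integrable_inv_ofReal_add_mul_I_pow {c b : ℝ} (hc : 0 < c) (hb : 0 < b) {k : ℕ}
    (hk : 2 ≤ k) : Integrable fun y : ℝ => (((c : ℂ) + b * y * I) ^ k)⁻¹ := by
  set r := min c b
  have hr : 0 < r := lt_min hc hb
  refine ((integrable_inv_one_add_sq).const_mul (r ^ k)⁻¹).mono' (by fun_prop) ?_
  refine ae_of_all _ fun y => ?_
  have hsq : ‖(c : ℂ) + b * y * I‖ ^ 2 = c ^ 2 + b ^ 2 * y ^ 2 := by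
    rw [Complex.sq_norm, Complex.normSq_apply]; simp; ring
  have hge : r ≤ ‖(c : ℂ) + b * y * I‖ := by
    refine (min_le_left c b).trans ?_
    simpa [abs_of_pos hc] using Complex.abs_re_le_norm ((c : ℂ) + b * y * I)
  have hsq_ge : r ^ 2 * (1 + y ^ 2) ≤ ‖(c : ℂ) + b * y * I‖ ^ 2 := by
    rw [hsq]
    have := pow_le_pow_left₀ hr.le (min_le_left c b) 2
    have := pow_le_pow_left₀ hr.le (min_le_right c b) 2
    nlinarith [sq_nonneg y]
  have hpow : r ^ k * (1 + y ^ 2) ≤ ‖(c : ℂ) + b * y * I‖ ^ k := by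
    obtain ⟨j, rfl⟩ : ∃ j, k = j + 2 := ⟨k - 2, by omega⟩
    rw [pow_add, pow_add, mul_assoc]
    exact mul_le_mul (pow_le_pow_left₀ hr.le hge j) hsq_ge (by positivity) (by positivity)
  rw [norm_inv, norm_pow, ← mul_inv]
  exact inv_anti₀ (by positivity) hpow

noncomputable def powExpIoi (n : ℕ) (c : ℝ) : ℝ → ℂ :=
  (Ioi 0).indicator fun t => (t : ℂ) ^ n * cexp (-c * t)

section PowExpIoi

variable (n : ℕ) {c : ℝ}

lemma integrable_powExpIoi (hc : 0 < c) : Integrable (powExpIoi n c) :=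
  (integrable_indicator_iff measurableSet_Ioi).2
    (integrableOn_ofReal_pow_mul_cexp_neg_mul n (by simpa))

lemma fourier_powExpIoi (hc : 0 < c) (y : ℝ) :
    𝓕 (powExpIoi n c) y = n ! / (c + 2 * π * y * I) ^ (n + 1) := by
  have hre : 0 < ((c : ℂ) + 2 * π * y * I).re := by simpa
  rw [Real.fourier_real_eq_integral_exp_smul, ← integral_Ioi_ofReal_pow_mul_cexp_neg_mul n hre,
    ← integral_indicator measurableSet_Ioi]
  congr 1 with t
  rw [powExpIoi, ← indicator_smul_apply (Ioi 0) fun t : ℝ => cexp (↑(-2 * π * t * y) * I)]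
  congr 1 with t
  rw [smul_eq_mul, mul_left_comm, ← Complex.exp_add]
  push_cast
  ring_nf

lemma integrable_fourier_powExpIoi (hn : 1 ≤ n) (hc : 0 < c) :
    Integrable (𝓕 (powExpIoi n c)) := by
  have := (integrable_inv_ofReal_add_mul_I_pow hc (by positivity : 0 < 2 * π)
    (by omega : 2 ≤ n + 1)).const_mul (n ! : ℂ)
  refine this.congr (ae_of_all _ fun y => ?_)
  rw [fourier_powExpIoi n hc]
  push_cast
  rfl

lemma integral_cexp_mul_factorial_div_pow (hn : 1 ≤ n) (hc : 0 < c) {v : ℝ} (hv : 0 < v) :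
    ∫ y : ℝ, cexp (2 * π * v * y * I) * (n ! / (c + 2 * π * y * I) ^ (n + 1)) =
      v ^ n * cexp (-c * v) := by
  have hcont : ContinuousAt (powExpIoi n c) v := by
    refine ContinuousAt.congr (f := fun t : ℝ => (t : ℂ) ^ n * cexp (-c * t)) (by fun_prop) ?_
    filter_upwards [Ioi_mem_nhds hv] with t ht
    rw [powExpIoi, indicator_of_mem ht]
  have hinv := (integrable_powExpIoi n hc).fourierInv_fourier_eq
    (integrable_fourier_powExpIoi n hn hc) hcont
  have hval : powExpIoi n c v = v ^ n * cexp (-c * v) := indicator_of_mem (mem_Ioi.2 hv) _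
  rw [← hval, ← hinv, fourierInv_eq_fourier_neg, Real.fourier_real_eq_integral_exp_smul]
  congr 1 with y
  rw [smul_eq_mul, fourier_powExpIoi n hc]
  push_cast
  ring_nf

lemma integrable_cexp_mul_factorial_div_pow (hn : 1 ≤ n) (hc : 0 < c) (v : ℝ) :
    Integrable fun y : ℝ =>
      cexp (2 * π * v * y * I) * (n ! / (c + 2 * π * y * I) ^ (n + 1)) := by
  refine ((integrable_fourier_powExpIoi n hn hc).bdd_mul (c := 1)
    (f := fun y : ℝ => cexp (2 * π * v * y * I)) (by fun_prop)
    (ae_of_all _ fun y => ?_)).congr (ae_of_all _ fun y => ?_)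
  · simp [norm_exp]
  · dsimp only
    rw [fourier_powExpIoi n hc]

end PowExpIoi

/-- The integrand of `double_integral_eval`, written with `m = n + 1`. -/
noncomputable def thetaIntegrand (n : ℕ) (t y : ℝ) : ℂ :=
  t ^ n * (-2 + I * y) ^ (n + 1) * cexp (-π * t * (4 + y ^ 2)) * cexp (2 * π * I * y)

section ThetaIntegrand

variable (n : ℕ) (y : ℝ)

lemma thetaIntegrand_eq_mul (t : ℝ) :
    thetaIntegrand n t y = (-2 + I * y) ^ (n + 1) * cexp (2 * π * I * y) *
      ((t : ℂ) ^ n * cexp (-(π * (4 + y ^ 2) : ℝ) * t)) := by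
  rw [thetaIntegrand]
  push_cast
  ring_nf

lemma integrableOn_thetaIntegrand : IntegrableOn (thetaIntegrand n · y) (Ioi 0) := by
  simp_rw [thetaIntegrand_eq_mul]
  exact (integrableOn_ofReal_pow_mul_cexp_neg_mul n (by rw [ofReal_re]; positivity)).const_mul _

lemma integral_Ioi_thetaIntegrand :
    ∫ t in Ioi (0 : ℝ), thetaIntegrand n t y = (-2 + I * y) ^ (n + 1) * cexp (2 * π * I * y) *
      (n ! / ((π * (4 + y ^ 2) : ℝ) : ℂ) ^ (n + 1)) := by
  simp_rw [thetaIntegrand_eq_mul]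
  rw [integral_const_mul,
    integral_Ioi_ofReal_pow_mul_cexp_neg_mul n (by rw [ofReal_re]; positivity)]

lemma integral_Ioi_norm_thetaIntegrand :
    ∫ t in Ioi (0 : ℝ), ‖thetaIntegrand n t y‖ =
      ‖∫ t in Ioi (0 : ℝ), thetaIntegrand n t y‖ := by
  have hpos : 0 < π * (4 + y ^ 2) := by positivity
  rw [integral_Ioi_thetaIntegrand, setIntegral_congr_fun measurableSet_Ioi fun t ht => by
    rw [thetaIntegrand_eq_mul, norm_mul, norm_ofReal_pow_mul_cexp_neg_mul n ht.le,
      ofReal_re]]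
  rw [integral_const_mul, integral_Ioi_pow_mul_exp_neg_mul n hpos]
  simp only [norm_mul, norm_div, norm_pow, Complex.norm_natCast, norm_real,
    Real.norm_of_nonneg hpos.le]

lemma integral_Ioi_thetaIntegrand_eq_neg_two_pow_mul :
    ∫ t in Ioi (0 : ℝ), thetaIntegrand n t y =
      (-2) ^ (n + 1) * (cexp (2 * π * y * I) * (n ! / (4 * π + 2 * π * y * I) ^ (n + 1))) := by
  have hA : ((π * (4 + y ^ 2) : ℝ) : ℂ) ≠ 0 := ofReal_ne_zero.2 (by positivity)
  have hB : 4 * π + 2 * π * y * I ≠ 0 := fun h => by simpa [pi_ne_zero] using congrArg re h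
  have hratio :
      (-2 + I * y) * ((π * (4 + y ^ 2) : ℝ) : ℂ)⁻¹ =
        -2 * (4 * π + 2 * π * y * I)⁻¹ := by
    rw [mul_inv_eq_iff_eq_mul₀ hA, mul_right_comm, eq_mul_inv_iff_mul_eq₀ hB]
    push_cast
    linear_combination (2 * π * (y : ℂ) ^ 2) * I_sq
  rw [integral_Ioi_thetaIntegrand, show (2 : ℂ) * π * I * y = 2 * π * y * I by ring]
  generalize (-2 + I * y) = w, ((π * (4 + y ^ 2) : ℝ) : ℂ) = A, 4 * π + 2 * π * y * I = B,
    cexp (2 * π * y * I) = e at *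
  rw [div_eq_mul_inv, div_eq_mul_inv, ← inv_pow, ← inv_pow]
  calc _ = (w * A⁻¹) ^ (n + 1) * e * n ! := by rw [mul_pow]; ring
    _ = _ := by rw [hratio, mul_pow]; ring

end ThetaIntegrand

/-- Evaluation of the inner Whittaker-theta integral: for `m ≥ 2`, the function
`(t,y) ↦ t^{m−1}·(−2 + iy)^m·exp(−πt(4 + y²))·e^{2πiy}` is absolutely integrable on
`(0,∞) × ℝ` and its iterated integral equals `(−2)^m · e^{−4π}`. -/
theorem double_integral_eval (m : ℕ) (hm : 2 ≤ m) :
    IntegrableOn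
      (fun p : ℝ × ℝ => (p.1 : ℂ) ^ (m - 1) * (-2 + Complex.I * (p.2 : ℂ)) ^ m *
        Complex.exp (-(π : ℂ) * (p.1 : ℂ) * (4 + (p.2 : ℂ) ^ 2)) *
        Complex.exp (2 * (π : ℂ) * Complex.I * (p.2 : ℂ)))
      (Set.Ioi (0 : ℝ) ×ˢ (Set.univ : Set ℝ)) ∧
    ∫ y : ℝ, ∫ t in Set.Ioi (0 : ℝ),
        ((t : ℂ) ^ (m - 1) * (-2 + Complex.I * (y : ℂ)) ^ m *
          Complex.exp (-(π : ℂ) * (t : ℂ) * (4 + (y : ℂ) ^ 2)) *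
          Complex.exp (2 * (π : ℂ) * Complex.I * (y : ℂ))) =
      (-2 : ℂ) ^ m * Complex.exp (-4 * (π : ℂ)) := by
  obtain ⟨n, rfl⟩ : ∃ n, m = n + 1 := ⟨m - 1, by omega⟩
  change IntegrableOn (fun p : ℝ × ℝ => thetaIntegrand n p.1 p.2) _ ∧
    ∫ y : ℝ, ∫ t in Ioi (0 : ℝ), thetaIntegrand n t y = _
  have hn : 1 ≤ n := by omega
  have h4π : 0 < 4 * π := by positivity
  have hint := integrable_cexp_mul_factorial_div_pow n hn h4π 1
  have hval := integral_cexp_mul_factorial_div_pow n hn h4π one_pos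
  push_cast at hint hval
  simp only [mul_one, one_pow, one_mul] at hint hval
  constructor
  · rw [IntegrableOn, Measure.volume_eq_prod, ← Measure.prod_restrict, Measure.restrict_univ]
    refine (integrable_prod_iff' (Continuous.aestronglyMeasurable ?_)).2
      ⟨ae_of_all _ (integrableOn_thetaIntegrand n), ?_⟩
    · unfold thetaIntegrand; fun_prop
    simp_rw [integral_Ioi_norm_thetaIntegrand, integral_Ioi_thetaIntegrand_eq_neg_two_pow_mul]
    exact (hint.const_mul _).norm
  · simp_rw [integral_Ioi_thetaIntegrand_eq_neg_two_pow_mul]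
    rw [integral_const_mul, hval]
    ring_nf
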